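/- Let u : I × ℝ² → ℝ be a classical solution of the hyperelastic compressible plate equation (u_t − u_{xxt} + 3 u u_x − γ(2 u_x u_{xx} + u u_{xxx}))_x − α u_{yy} + β u_{xxyy} = 0 (with α, β, γ ∈ [0,∞)) which is x-symmetric with axis of symmetry λ ∈ C¹(ℝ). Then u satisfies both equations L(u_t + λ̇ u_x) = 0 and −λ̇ L u_x + (3 u u_x − γ(2 u_x u_{xx} + u u_{xxx}))_x − α u_{yy} + β u_{xxyy} = 0 on I × ℝ², where L is the operator Lf := ∂_x(1 − ∂_x²)f. -/

import Mathlib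

open Set

/-- Partial derivative in the time variable `t` of a function `u(t,x,y)`. -/
noncomputable def pt (u : ℝ → ℝ → ℝ → ℝ) : ℝ → ℝ → ℝ → ℝ :=
  fun t x y => deriv (fun s => u s x y) t

/-- Partial derivative in the horizontal variable `x` of a function `u(t,x,y)`. -/
noncomputable def px (u : ℝ → ℝ → ℝ → ℝ) : ℝ → ℝ → ℝ → ℝ :=
  fun t x y => deriv (fun s => u t s y) x

/-- Partial derivative in the transversal variable `y` of a function `u(t,x,y)`. -/
noncomputable def py (u : ℝ → ℝ → ℝ → ℝ) : ℝ → ℝ → ℝ → ℝ :=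
  fun t x y => deriv (fun s => u t x s) y

/-- The operator `L f = ∂ₓ(1 - ∂ₓ²) f = fₓ - fₓₓₓ`, acting in the `x`-variable. -/
noncomputable def Lx (u : ℝ → ℝ → ℝ → ℝ) : ℝ → ℝ → ℝ → ℝ :=
  fun t x y => px u t x y - px (px (px u)) t x y
abbrev Sm (u : ℝ → ℝ → ℝ → ℝ) : Prop := ContDiff ℝ (⊤ : ℕ∞) (fun p : ℝ × ℝ × ℝ => u p.1 p.2.1 p.2.2)

theorem hasDerivAt_px' (u : ℝ → ℝ → ℝ → ℝ) (hu : Sm u) (t x y : ℝ) :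
    HasDerivAt (fun a => u t a y)
      (fderiv ℝ (fun p : ℝ × ℝ × ℝ => u p.1 p.2.1 p.2.2) (t,x,y) (0,1,0)) x := by
  have h := (hu.differentiable (by simp) (t,x,y)).hasFDerivAt
  have hc : HasDerivAt (fun a : ℝ => ((t,a,y) : ℝ × ℝ × ℝ)) (0,1,0) x :=
    (hasDerivAt_const x t).prodMk ((hasDerivAt_id x).prodMk (hasDerivAt_const x y))
  exact h.comp_hasDerivAt x hc

theorem px_eq (u : ℝ → ℝ → ℝ → ℝ) (hu : Sm u) (t x y : ℝ) :
    px u t x y = fderiv ℝ (fun p : ℝ × ℝ × ℝ => u p.1 p.2.1 p.2.2) (t,x,y) (0,1,0) :=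
  (hasDerivAt_px' u hu t x y).deriv

theorem hasDerivAt_px (u : ℝ → ℝ → ℝ → ℝ) (hu : Sm u) (t x y : ℝ) :
    HasDerivAt (fun a => u t a y) (px u t x y) x := by
  rw [px_eq u hu]; exact hasDerivAt_px' u hu t x y

theorem smooth_px (u : ℝ → ℝ → ℝ → ℝ) (hu : Sm u) : Sm (px u) := by
  have h : (fun p : ℝ × ℝ × ℝ => px u p.1 p.2.1 p.2.2)
      = fun p => fderiv ℝ (fun p : ℝ × ℝ × ℝ => u p.1 p.2.1 p.2.2) p (0,1,0) := by
    funext p; exact px_eq u hu p.1 p.2.1 p.2.2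
  show ContDiff ℝ (⊤ : ℕ∞) (fun p : ℝ × ℝ × ℝ => px u p.1 p.2.1 p.2.2)
  rw [h]
  exact (hu.fderiv_right (mod_cast le_top)).clm_apply contDiff_const

theorem hasDerivAt_pt' (u : ℝ → ℝ → ℝ → ℝ) (hu : Sm u) (t x y : ℝ) :
    HasDerivAt (fun s => u s x y)
      (fderiv ℝ (fun p : ℝ × ℝ × ℝ => u p.1 p.2.1 p.2.2) (t,x,y) (1,0,0)) t := by
  have h := (hu.differentiable (by simp) (t,x,y)).hasFDerivAt
  have hc : HasDerivAt (fun s : ℝ => ((s,x,y) : ℝ × ℝ × ℝ)) (1,0,0) t :=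
    (hasDerivAt_id t).prodMk ((hasDerivAt_const t x).prodMk (hasDerivAt_const t y))
  exact h.comp_hasDerivAt t hc

theorem pt_eq (u : ℝ → ℝ → ℝ → ℝ) (hu : Sm u) (t x y : ℝ) :
    pt u t x y = fderiv ℝ (fun p : ℝ × ℝ × ℝ => u p.1 p.2.1 p.2.2) (t,x,y) (1,0,0) :=
  (hasDerivAt_pt' u hu t x y).deriv

theorem hasDerivAt_pt (u : ℝ → ℝ → ℝ → ℝ) (hu : Sm u) (t x y : ℝ) :
    HasDerivAt (fun s => u s x y) (pt u t x y) t := by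
  rw [pt_eq u hu]; exact hasDerivAt_pt' u hu t x y

theorem smooth_pt (u : ℝ → ℝ → ℝ → ℝ) (hu : Sm u) : Sm (pt u) := by
  have h : (fun p : ℝ × ℝ × ℝ => pt u p.1 p.2.1 p.2.2)
      = fun p => fderiv ℝ (fun p : ℝ × ℝ × ℝ => u p.1 p.2.1 p.2.2) p (1,0,0) := by
    funext p; exact pt_eq u hu p.1 p.2.1 p.2.2
  show ContDiff ℝ (⊤ : ℕ∞) (fun p : ℝ × ℝ × ℝ => pt u p.1 p.2.1 p.2.2)
  rw [h]
  exact (hu.fderiv_right (mod_cast le_top)).clm_apply contDiff_const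

theorem diffx (u : ℝ → ℝ → ℝ → ℝ) (hu : Sm u) (t x y : ℝ) :
    DifferentiableAt ℝ (fun a => u t a y) x :=
  (hasDerivAt_px u hu t x y).differentiableAt

theorem parity_even (f : ℝ → ℝ) (c : ℝ) (h : ∀ z, f z = f (2*c - z)) (x : ℝ) :
    deriv f x = - deriv f (2*c - x) := by
  have hf : f = fun z => f (2*c - z) := funext h
  conv_lhs => rw [hf]
  exact deriv_comp_const_sub f (2*c) x

theorem parity_odd (f : ℝ → ℝ) (c : ℝ) (h : ∀ z, f z = - f (2*c - z)) (x : ℝ) :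
    deriv f x = deriv f (2*c - x) := by
  have hf : f = fun z => - f (2*c - z) := funext h
  conv_lhs => rw [hf]
  rw [deriv.fun_neg, deriv_comp_const_sub]
  ring
/-- An `x`-symmetric classical solution of the hyperelastic compressible plate equation
`(uₜ - uₓₓₜ + 3 u uₓ - γ(2 uₓ uₓₓ + u uₓₓₓ))ₓ - α u_yy + β u_xxyy = 0` satisfies both
`L(uₜ + λ̇ uₓ) = 0` and
`-λ̇ L uₓ + (3 u uₓ - γ(2 uₓ uₓₓ + u uₓₓₓ))ₓ - α u_yy + β u_xxyy = 0`. -/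
theorem hcp_xSymmetric_splits
    (T : ℝ) (hT : 0 < T) (α β γ : ℝ) (hα : 0 ≤ α) (hβ : 0 ≤ β) (hγ : 0 ≤ γ)
    (u : ℝ → ℝ → ℝ → ℝ)
    (hu : ContDiff ℝ (⊤ : ℕ∞) (fun p : ℝ × ℝ × ℝ => u p.1 p.2.1 p.2.2))
    (heq : ∀ t ∈ Icc (0:ℝ) T, ∀ x y : ℝ,
      px (fun t x y => pt u t x y - px (px (pt u)) t x y + 3 * u t x y * px u t x y
          - γ * (2 * px u t x y * px (px u) t x y + u t x y * px (px (px u)) t x y)) t x y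
        - α * py (py u) t x y + β * px (px (py (py u))) t x y = 0)
    (lam : ℝ → ℝ) (hlam : ContDiff ℝ 1 lam)
    (hsym : ∀ t ∈ Icc (0:ℝ) T, ∀ x y : ℝ, u t x y = u t (2 * lam t - x) y) :
    ∀ t ∈ Icc (0:ℝ) T, ∀ x y : ℝ,
      Lx (fun s a b => pt u s a b + deriv lam s * px u s a b) t x y = 0 ∧
      - (deriv lam t * Lx (px u) t x y)
        + px (fun t x y => 3 * u t x y * px u t x y
            - γ * (2 * px u t x y * px (px u) t x y + u t x y * px (px (px u)) t x y)) t x y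
        - α * py (py u) t x y + β * px (px (py (py u))) t x y = 0 := by
  intro t ht
  have sm1 : Sm (px u) := smooth_px u hu
  have sm2 : Sm (px (px u)) := smooth_px _ sm1
  have sm3 : Sm (px (px (px u))) := smooth_px _ sm2
  have smt : Sm (pt u) := smooth_pt u hu
  have smt1 : Sm (px (pt u)) := smooth_px _ smt
  have smt2 : Sm (px (px (pt u))) := smooth_px _ smt1
  -- symmetry chain in x
  have h0 : ∀ x y : ℝ, u t x y = u t (2 * lam t - x) y := hsym t ht
  have h1 : ∀ x y : ℝ, px u t x y = - px u t (2 * lam t - x) y := fun x y =>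
    parity_even (fun a => u t a y) (lam t) (fun z => h0 z y) x
  have h2 : ∀ x y : ℝ, px (px u) t x y = px (px u) t (2 * lam t - x) y := fun x y =>
    parity_odd (fun a => px u t a y) (lam t) (fun z => h1 z y) x
  have h3 : ∀ x y : ℝ, px (px (px u)) t x y = - px (px (px u)) t (2 * lam t - x) y := fun x y =>
    parity_even (fun a => px (px u) t a y) (lam t) (fun z => h2 z y) x
  have h4 : ∀ x y : ℝ, px (px (px (px u))) t x y = px (px (px (px u))) t (2 * lam t - x) y :=
    fun x y => parity_odd (fun a => px (px (px u)) t a y) (lam t) (fun z => h3 z y) x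
  -- symmetry of y-derivatives
  have hy0 : ∀ x y : ℝ, py u t x y = py u t (2 * lam t - x) y := by
    intro x y
    show deriv (fun s => u t x s) y = deriv (fun s => u t (2 * lam t - x) s) y
    congr 1
    funext b
    exact h0 x b
  have hy1 : ∀ x y : ℝ, py (py u) t x y = py (py u) t (2 * lam t - x) y := by
    intro x y
    show deriv (fun s => py u t x s) y = deriv (fun s => py u t (2 * lam t - x) s) y
    congr 1
    funext b
    exact hy0 x b
  have hy2 : ∀ x y : ℝ, px (py (py u)) t x y = - px (py (py u)) t (2 * lam t - x) y :=
    fun x y => parity_even (fun a => py (py u) t a y) (lam t) (fun z => hy1 z y) x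
  have hy3 : ∀ x y : ℝ, px (px (py (py u))) t x y = px (px (py (py u))) t (2 * lam t - x) y :=
    fun x y => parity_odd (fun a => px (py (py u)) t a y) (lam t) (fun z => hy2 z y) x
  -- the t-derivative symmetry identity
  have hlam' : ∀ s : ℝ, HasDerivAt lam (deriv lam s) s := fun s =>
    ((hlam.differentiable one_ne_zero) s).hasDerivAt
  have hT' : ∀ x y : ℝ, pt u t x y
      = pt u t (2 * lam t - x) y + 2 * deriv lam t * px u t (2 * lam t - x) y := by
    intro x y
    have hF : HasDerivAt (fun s => u s x y) (pt u t x y) t := hasDerivAt_pt u hu t x y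
    have hcurve : HasDerivAt (fun s : ℝ => ((s, 2 * lam s - x, y) : ℝ × ℝ × ℝ))
        (1, 2 * deriv lam t, 0) t :=
      (hasDerivAt_id t).prodMk ((((hlam' t).const_mul 2).sub_const x).prodMk (hasDerivAt_const t y))
    have hU := (hu.differentiable (by simp) (t, 2 * lam t - x, y)).hasFDerivAt
    have hG : HasDerivAt (fun s => u s (2 * lam s - x) y)
        (fderiv ℝ (fun p : ℝ × ℝ × ℝ => u p.1 p.2.1 p.2.2) (t, 2 * lam t - x, y)
          (1, 2 * deriv lam t, 0)) t := by have := hU.comp_hasDerivAt t hcurve; exact this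
    have hval : (fderiv ℝ (fun p : ℝ × ℝ × ℝ => u p.1 p.2.1 p.2.2) (t, 2 * lam t - x, y))
          (1, 2 * deriv lam t, 0)
        = pt u t (2 * lam t - x) y + 2 * deriv lam t * px u t (2 * lam t - x) y := by
      have hsplit : ((1, 2 * deriv lam t, 0) : ℝ × ℝ × ℝ)
          = (1,0,0) + (2 * deriv lam t) • ((0:ℝ),(1:ℝ),(0:ℝ)) := by simp
      rw [hsplit, map_add, map_smul, ← pt_eq u hu, ← px_eq u hu, smul_eq_mul]
    calc pt u t x y = deriv (fun s => u s x y) t := rfl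
      _ = derivWithin (fun s => u s x y) (Icc 0 T) t :=
          (hF.hasDerivWithinAt.derivWithin ((uniqueDiffOn_Icc hT) t ht)).symm
      _ = derivWithin (fun s => u s (2 * lam s - x) y) (Icc 0 T) t :=
          derivWithin_congr (fun s hs => hsym s hs x y) (hsym t ht x y)
      _ = (fderiv ℝ (fun p : ℝ × ℝ × ℝ => u p.1 p.2.1 p.2.2) (t, 2 * lam t - x, y))
            (1, 2 * deriv lam t, 0) :=
          hG.hasDerivWithinAt.derivWithin ((uniqueDiffOn_Icc hT) t ht)
      _ = _ := hval
  -- evenness of v = u_t + lam' u_x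
  have hVeven : ∀ x y : ℝ, pt u t x y + deriv lam t * px u t x y
      = pt u t (2 * lam t - x) y + deriv lam t * px u t (2 * lam t - x) y := by
    intro x y
    rw [hT' x y, h1 x y]
    ring
  -- derivatives of A := fun s a b => pt u s a b + deriv lam s * px u s a b in x
  have stepA : ∀ x y : ℝ, px (fun s a b => pt u s a b + deriv lam s * px u s a b) t x y
      = px (pt u) t x y + deriv lam t * px (px u) t x y := by
    intro x y
    show deriv (fun a => pt u t a y + deriv lam t * px u t a y) x = _
    rw [deriv_fun_add (diffx _ smt t x y) ((diffx _ sm1 t x y).const_mul _),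
      deriv_const_mul _ (diffx _ sm1 t x y)]
    rfl
  have stepA2 : ∀ x y : ℝ, px (px (fun s a b => pt u s a b + deriv lam s * px u s a b)) t x y
      = px (px (pt u)) t x y + deriv lam t * px (px (px u)) t x y := by
    intro x y
    show deriv (fun a => px (fun s a b => pt u s a b + deriv lam s * px u s a b) t a y) x = _
    have hfg : (fun a => px (fun s a b => pt u s a b + deriv lam s * px u s a b) t a y)
        = fun a => px (pt u) t a y + deriv lam t * px (px u) t a y := funext fun a => stepA a y
    rw [hfg, deriv_fun_add (diffx _ smt1 t x y) ((diffx _ sm2 t x y).const_mul _),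
      deriv_const_mul _ (diffx _ sm2 t x y)]
    rfl
  have stepA3 : ∀ x y : ℝ,
      px (px (px (fun s a b => pt u s a b + deriv lam s * px u s a b))) t x y
      = px (px (px (pt u))) t x y + deriv lam t * px (px (px (px u))) t x y := by
    intro x y
    show deriv (fun a => px (px (fun s a b => pt u s a b + deriv lam s * px u s a b)) t a y) x = _
    have hfg : (fun a => px (px (fun s a b => pt u s a b + deriv lam s * px u s a b)) t a y)
        = fun a => px (px (pt u)) t a y + deriv lam t * px (px (px u)) t a y :=
      funext fun a => stepA2 a y
    rw [hfg, deriv_fun_add (diffx _ smt2 t x y) ((diffx _ sm3 t x y).const_mul _),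
      deriv_const_mul _ (diffx _ sm3 t x y)]
    rfl
  -- parity of x-derivatives of A
  have hA1 : ∀ x y : ℝ, px (fun s a b => pt u s a b + deriv lam s * px u s a b) t x y
      = - px (fun s a b => pt u s a b + deriv lam s * px u s a b) t (2 * lam t - x) y :=
    fun x y => parity_even (fun a => pt u t a y + deriv lam t * px u t a y) (lam t)
      (fun z => hVeven z y) x
  have hA2 : ∀ x y : ℝ, px (px (fun s a b => pt u s a b + deriv lam s * px u s a b)) t x y
      = px (px (fun s a b => pt u s a b + deriv lam s * px u s a b)) t (2 * lam t - x) y :=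
    fun x y => parity_odd (fun a => px (fun s a b => pt u s a b + deriv lam s * px u s a b) t a y)
      (lam t) (fun z => hA1 z y) x
  have hA3 : ∀ x y : ℝ, px (px (px (fun s a b => pt u s a b + deriv lam s * px u s a b))) t x y
      = - px (px (px (fun s a b => pt u s a b + deriv lam s * px u s a b))) t (2 * lam t - x) y :=
    fun x y => parity_even
      (fun a => px (px (fun s a b => pt u s a b + deriv lam s * px u s a b)) t a y)
      (lam t) (fun z => hA2 z y) x
  -- split the equation
  have hNd : ∀ x y : ℝ, DifferentiableAt ℝ (fun a => 3 * u t a y * px u t a y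
      - γ * (2 * px u t a y * px (px u) t a y + u t a y * px (px (px u)) t a y)) x := by
    intro x y
    exact (((diffx u hu t x y).const_mul 3).mul (diffx _ sm1 t x y)).sub
      (((((diffx _ sm1 t x y).const_mul 2).mul (diffx _ sm2 t x y)).add
        ((diffx u hu t x y).mul (diffx _ sm3 t x y))).const_mul γ)
  have hsplitEq : ∀ x y : ℝ,
      (px (pt u) t x y - px (px (px (pt u))) t x y)
      + px (fun t x y => 3 * u t x y * px u t x y
            - γ * (2 * px u t x y * px (px u) t x y + u t x y * px (px (px u)) t x y)) t x y
      - α * py (py u) t x y + β * px (px (py (py u))) t x y = 0 := by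
    intro x y
    have hE := heq t ht x y
    have hre : px (fun t x y => pt u t x y - px (px (pt u)) t x y + 3 * u t x y * px u t x y
          - γ * (2 * px u t x y * px (px u) t x y + u t x y * px (px (px u)) t x y)) t x y
        = (px (pt u) t x y - px (px (px (pt u))) t x y)
          + px (fun t x y => 3 * u t x y * px u t x y
            - γ * (2 * px u t x y * px (px u) t x y + u t x y * px (px (px u)) t x y)) t x y := by
      show deriv (fun a => pt u t a y - px (px (pt u)) t a y + 3 * u t a y * px u t a y
          - γ * (2 * px u t a y * px (px u) t a y + u t a y * px (px (px u)) t a y)) x = _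
      have hfg : (fun a => pt u t a y - px (px (pt u)) t a y + 3 * u t a y * px u t a y
          - γ * (2 * px u t a y * px (px u) t a y + u t a y * px (px (px u)) t a y))
          = fun a => (pt u t a y - px (px (pt u)) t a y) + (3 * u t a y * px u t a y
          - γ * (2 * px u t a y * px (px u) t a y + u t a y * px (px (px u)) t a y)) := by
        funext a; ring
      rw [hfg, deriv_fun_add ((diffx _ smt t x y).fun_sub (diffx _ smt2 t x y)) (hNd x y),
        deriv_fun_sub (diffx _ smt t x y) (diffx _ smt2 t x y)]
      rfl
    rw [hre] at hE
    linarith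
  -- oddness of the nonlinearity, evenness of its x-derivative
  have hNodd : ∀ x y : ℝ, (3 * u t x y * px u t x y
        - γ * (2 * px u t x y * px (px u) t x y + u t x y * px (px (px u)) t x y))
      = - (3 * u t (2 * lam t - x) y * px u t (2 * lam t - x) y
        - γ * (2 * px u t (2 * lam t - x) y * px (px u) t (2 * lam t - x) y
          + u t (2 * lam t - x) y * px (px (px u)) t (2 * lam t - x) y)) := by
    intro x y
    rw [h0 x y, h1 x y, h2 x y, h3 x y]
    ring
  have hNx : ∀ x y : ℝ, px (fun t x y => 3 * u t x y * px u t x y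
        - γ * (2 * px u t x y * px (px u) t x y + u t x y * px (px (px u)) t x y)) t x y
      = px (fun t x y => 3 * u t x y * px u t x y
        - γ * (2 * px u t x y * px (px u) t x y + u t x y * px (px (px u)) t x y))
          t (2 * lam t - x) y :=
    fun x y => parity_odd (fun a => 3 * u t a y * px u t a y
      - γ * (2 * px u t a y * px (px u) t a y + u t a y * px (px (px u)) t a y))
      (lam t) (fun z => hNodd z y) x
  -- Lx A expressed via u
  have LAx : ∀ x y : ℝ, Lx (fun s a b => pt u s a b + deriv lam s * px u s a b) t x y
      = (px (pt u) t x y - px (px (px (pt u))) t x y)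
        + deriv lam t * (px (px u) t x y - px (px (px (px u))) t x y) := by
    intro x y
    show px (fun s a b => pt u s a b + deriv lam s * px u s a b) t x y
      - px (px (px (fun s a b => pt u s a b + deriv lam s * px u s a b))) t x y = _
    rw [stepA x y, stepA3 x y]
    ring
  -- evenness of P := L(u_t)
  have hPeven : ∀ x y : ℝ, px (pt u) t x y - px (px (px (pt u))) t x y
      = px (pt u) t (2 * lam t - x) y - px (px (px (pt u))) t (2 * lam t - x) y := by
    intro x y
    have e1 := hsplitEq x y
    have e2 := hsplitEq (2 * lam t - x) y
    have e3 := hNx x y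
    have e4 : α * py (py u) t x y = α * py (py u) t (2 * lam t - x) y := by rw [hy1 x y]
    have e5 : β * px (px (py (py u))) t x y = β * px (px (py (py u))) t (2 * lam t - x) y := by
      rw [hy3 x y]
    linarith
  intro x y
  have heven : Lx (fun s a b => pt u s a b + deriv lam s * px u s a b) t x y
      = Lx (fun s a b => pt u s a b + deriv lam s * px u s a b) t (2 * lam t - x) y := by
    rw [LAx x y, LAx (2 * lam t - x) y, hPeven x y, h2 x y, h4 x y]
  have hodd : Lx (fun s a b => pt u s a b + deriv lam s * px u s a b) t x y
      = - Lx (fun s a b => pt u s a b + deriv lam s * px u s a b) t (2 * lam t - x) y := by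
    show px (fun s a b => pt u s a b + deriv lam s * px u s a b) t x y
        - px (px (px (fun s a b => pt u s a b + deriv lam s * px u s a b))) t x y
      = - (px (fun s a b => pt u s a b + deriv lam s * px u s a b) t (2 * lam t - x) y
        - px (px (px (fun s a b => pt u s a b + deriv lam s * px u s a b))) t (2 * lam t - x) y)
    rw [hA1 x y, hA3 x y]
    ring
  have hgoal1 : Lx (fun s a b => pt u s a b + deriv lam s * px u s a b) t x y = 0 := by
    linarith
  refine ⟨hgoal1, ?_⟩
  have hQ : Lx (px u) t x y = px (px u) t x y - px (px (px (px u))) t x y := rfl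
  have hL := LAx x y
  rw [hgoal1] at hL
  rw [hQ]
  linarith [hsplitEq x y]
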